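/- arXiv:2507.03259 — 4 statements merged into one kernel-verified Lean document; each statement's English description precedes it below -/
import Mathlib

section
/- If a coalition formation problem admits an effective top-partition collection, then that collection is unique. -/
/-- A partition of the agent set `N`, encoded by the map sending each agent to her coalition. -/
structure Partn (N : Type*) where
  cell : N → Set N
  mem_cell : ∀ i, i ∈ cell i
  cell_eq : ∀ i j, j ∈ cell i → cell j = cell i

/-- Coalition `C` is formed in partition `π` (i.e. `C ∈ π`). -/
def Partn.HasCoal {N : Type*} (π : Partn N) (C : Set N) : Prop := ∃ i, π.cell i = C

/-- `D(π,π')`: agents placed in different coalitions by `π` and `π'`. -/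
def Partn.diff {N : Type*} (π π' : Partn N) : Set N := {i | π.cell i ≠ π'.cell i}

/-- A coalition formation problem: a set of admissible partitions together with
complete and transitive preferences of each agent over partitions. -/
structure CFP (N : Type*) where
  adm : Set (Partn N)
  pref : N → Partn N → Partn N → Prop
  total : ∀ i, ∀ π ∈ adm, ∀ π' ∈ adm, pref i π π' ∨ pref i π' π
  trans : ∀ i π π' π'', pref i π π' → pref i π' π'' → pref i π π''

namespace CFP
variable {N : Type*}

/-- Strict preference. -/
def spref (P : CFP N) (i : N) (π π' : Partn N) : Prop := P.pref i π π' ∧ ¬ P.pref i π' π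

/-- Unrestricted domain condition: indifference only between partitions leaving
the agent in the same coalition. -/
def NoTies (P : CFP N) : Prop :=
  ∀ i, ∀ π ∈ P.adm, ∀ π' ∈ P.adm, P.pref i π π' → P.pref i π' π → π.cell i = π'.cell i

/-- Order-preserving preferences. -/
def OrderPreserving (P : CFP N) : Prop :=
  P.NoTies ∧
  ∀ i, ∀ π ∈ P.adm, ∀ π' ∈ P.adm, ∀ τ ∈ P.adm, ∀ τ' ∈ P.adm,
    π.cell i ≠ π'.cell i → P.spref i π π' →
    τ.cell i = π.cell i → τ'.cell i = π'.cell i → P.spref i τ τ'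

/-- `π` is myopically blocked by coalition `C` via `π'`. -/
def Blocks (P : CFP N) (C : Set N) (π π' : Partn N) : Prop :=
  π ∈ P.adm ∧ π' ∈ P.adm ∧ C.Nonempty ∧
  (∀ i ∈ C, P.pref i π' π) ∧
  (∃ j ∈ C, P.spref j π' π) ∧
  (∀ j, j ∉ C → (π.cell j ∩ C).Nonempty → π'.cell j = {j}) ∧
  (∀ j, π.cell j ∩ C = ∅ → π'.cell j = π.cell j)

/-- The (myopic) core. -/
def Core (P : CFP N) : Set (Partn N) :=
  {π | π ∈ P.adm ∧ ¬ ∃ C π', P.Blocks C π π'}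

/-- The set of (myopically) stable partitions. -/
def StableSet (P : CFP N) : Set (Partn N) :=
  {π | π ∈ P.adm ∧ ¬ ∃ C π', P.Blocks C π π' ∧ π'.HasCoal C}

/-- `V` is a top-partition collection: it consists exactly of the `|V|`-best
partitions of every agent, i.e. every agent strictly prefers every member of `V`
to every admissible partition outside `V`. -/
def TopCollection (P : CFP N) (V : Set (Partn N)) : Prop :=
  V.Nonempty ∧ V ⊆ P.adm ∧
  ∀ i, ∀ π ∈ V, ∀ π' ∈ P.adm, π' ∉ V → P.spref i π π'

/-- Effectiveness of a top-partition collection. -/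
def Effective (P : CFP N) (V : Set (Partn N)) : Prop :=
  ∀ π ∈ V, ∀ π' ∈ V, π ≠ π' →
    ∃ S : Set N, S.Nonempty ∧ S ⊆ π.diff π' ∧ π.HasCoal S ∧ ∀ i ∈ S, P.spref i π π'

/-- Weak effectiveness of a top-partition collection. -/
def WeakEffective (P : CFP N) (V : Set (Partn N)) : Prop :=
  ∀ π ∈ V, ∀ π' ∈ V, π ≠ π' → ∀ C : Set N,
    π'.HasCoal C →
    (∀ i ∈ C, π'.cell i = C) →
    (∀ i, i ∉ C →
      (π.cell i ∩ C = ∅ → π'.cell i = π.cell i) ∧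
      ((π.cell i ∩ C).Nonempty → π'.cell i = {i})) →
    ∃ j ∈ C, P.spref j π π'

/-- Domination: `π'` dominates `π` iff some coalition formed in `π'` blocks `π` via `π'`. -/
def Dom (P : CFP N) (π' π : Partn N) : Prop :=
  ∃ C, P.Blocks C π π' ∧ π'.HasCoal C

/-- Absorbing set for the myopic domination relation. -/
def Absorbing (P : CFP N) (A : Set (Partn N)) : Prop :=
  A.Nonempty ∧ A ⊆ P.adm ∧
  ∀ π ∈ A, ∀ π' ∈ P.adm, π' ≠ π → (Relation.TransGen P.Dom π' π ↔ π' ∈ A)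

/-- Weak-myopic blocking (condition (iii) of myopic blocking is dropped). -/
def WeakBlocks (P : CFP N) (C : Set N) (π π' : Partn N) : Prop :=
  π ∈ P.adm ∧ π' ∈ P.adm ∧ C.Nonempty ∧
  (∀ i ∈ C, P.pref i π' π) ∧
  (∃ j ∈ C, P.spref j π' π) ∧
  (∀ j, π.cell j ∩ C = ∅ → π'.cell j = π.cell j)

/-- The weak myopic core. -/
def WeakCore (P : CFP N) : Set (Partn N) :=
  {π | π ∈ P.adm ∧ ¬ ∃ C π', P.WeakBlocks C π π'}

/-- `Q` is the problem without externalities induced by the order-preserving problem `P`. -/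
def Induces (P Q : CFP N) : Prop :=
  Q.adm = P.adm ∧
  ∀ i, ∀ π ∈ P.adm, ∀ π' ∈ P.adm,
    (π.cell i = π'.cell i → Q.pref i π π' ∧ Q.pref i π' π) ∧
    (π.cell i ≠ π'.cell i → (P.spref i π π' ↔ Q.spref i π π'))

/-- Prudent blocking: every member of `C` compares `π` with her *worst* partition
placing her in `π'`'s coalition (equivalently, with all such partitions). -/
def PrudentBlocks (P : CFP N) (C : Set N) (π π' : Partn N) : Prop :=
  π ∈ P.adm ∧ π' ∈ P.adm ∧ C.Nonempty ∧
  (∀ i ∈ C, ∀ τ ∈ P.adm, τ.cell i = π'.cell i → P.pref i τ π) ∧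
  (∃ j ∈ C, ∀ τ ∈ P.adm, τ.cell j = π'.cell j → P.spref j τ π)

/-- Optimistic blocking: every member of `C` compares `π` with her *best* partition
placing her in `π'`'s coalition (equivalently, with some such partition). -/
def OptBlocks (P : CFP N) (C : Set N) (π π' : Partn N) : Prop :=
  π ∈ P.adm ∧ π' ∈ P.adm ∧ C.Nonempty ∧
  (∀ i ∈ C, ∃ τ ∈ P.adm, τ.cell i = π'.cell i ∧ P.pref i τ π) ∧
  (∃ j ∈ C, ∃ τ ∈ P.adm, τ.cell j = π'.cell j ∧ P.spref j τ π)

def PrudentDom (P : CFP N) (π' π : Partn N) : Prop :=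
  ∃ C, P.PrudentBlocks C π π' ∧ π'.HasCoal C

def OptDom (P : CFP N) (π' π : Partn N) : Prop :=
  ∃ C, P.OptBlocks C π π' ∧ π'.HasCoal C

def PrudentAbsorbing (P : CFP N) (A : Set (Partn N)) : Prop :=
  A.Nonempty ∧ A ⊆ P.adm ∧
  ∀ π ∈ A, ∀ π' ∈ P.adm, π' ≠ π → (Relation.TransGen P.PrudentDom π' π ↔ π' ∈ A)

def OptAbsorbing (P : CFP N) (A : Set (Partn N)) : Prop :=
  A.Nonempty ∧ A ⊆ P.adm ∧
  ∀ π ∈ A, ∀ π' ∈ P.adm, π' ≠ π → (Relation.TransGen P.OptDom π' π ↔ π' ∈ A)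

end CFP

/-! If `π ∈ V \ V'` and `σ ∈ V'`, then every agent strictly prefers `σ` to `π`, because `V'` is a
top-partition collection. But some agent strictly prefers `π` to `σ`: by effectiveness of `V` if
`σ ∈ V`, and because `V` is a top-partition collection if `σ ∉ V`. Hence `V ⊆ V'`, and by symmetry
`V = V'`. -/

lemma Partn.exists_cell_ne_of_ne {N : Type*} {π σ : Partn N} (h : π ≠ σ) :
    ∃ i, π.cell i ≠ σ.cell i := by
  contrapose! h
  cases π; cases σ
  simpa using funext h

namespace CFP

variable {N : Type*} {P : CFP N} {V V' : Set (Partn N)}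

lemma spref.not_spref {i : N} {π π' : Partn N} (h : P.spref i π π') : ¬ P.spref i π' π :=
  fun h' => h.2 h'.1

lemma exists_spref_of_effective_topCollection (hV : P.TopCollection V) (hVe : P.Effective V)
    {π σ : Partn N} (hπ : π ∈ V) (hσ : σ ∈ P.adm) (hne : π ≠ σ) :
    ∃ i, P.spref i π σ := by
  by_cases hσV : σ ∈ V
  · obtain ⟨S, ⟨i, hi⟩, -, -, hS⟩ := hVe π hπ σ hσV hne
    exact ⟨i, hS i hi⟩
  · -- `π ≠ σ` is what guarantees that there is an agent at all
    obtain ⟨i, -⟩ := Partn.exists_cell_ne_of_ne hne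
    exact ⟨i, hV.2.2 i π hπ σ hσ hσV⟩

lemma TopCollection.subset_of_effective (hV : P.TopCollection V) (hVe : P.Effective V)
    (hV' : P.TopCollection V') : V ⊆ V' := by
  intro π hπ
  by_contra hπV'
  obtain ⟨σ, hσ⟩ := hV'.1
  have hne : π ≠ σ := fun h => hπV' (h ▸ hσ)
  obtain ⟨i, hi⟩ := exists_spref_of_effective_topCollection hV hVe hπ (hV'.2.1 hσ) hne
  exact hi.not_spref (hV'.2.2 i σ hσ π (hV.2.1 hπ) hπV')

end CFP

theorem effective_top_collection_unique_general {N : Type*} (P : CFP N)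
    (V V' : Set (Partn N)) (hV : P.TopCollection V) (hVe : P.Effective V)
    (hV' : P.TopCollection V') (hV'e : P.Effective V') : V = V' :=
  (hV.subset_of_effective hVe hV').antisymm (hV'.subset_of_effective hV'e hV)

/-- an effective top-partition collection, if it exists, is unique. -/
theorem effective_top_collection_unique {N : Type*} (P : CFP N) (hP : P.NoTies)
    (V V' : Set (Partn N)) (hV : P.TopCollection V) (hVe : P.Effective V)
    (hV' : P.TopCollection V') (hV'e : P.Effective V') : V = V' :=
  effective_top_collection_unique_general P V V' hV hVe hV' hV'e
end

section
/- Let (K,≿) be a coalition formation problem with unrestricted preferences (indifference only between partitions leaving the agent in the same coalition). If there is an effective top-partition collection V, then the myopic core equals V. -/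
/-! An admissible partition outside `V` is blocked by the grand coalition moving to any member
of `V`. A member `π` of `V` cannot be blocked via a partition outside `V`, since `V` is on top of
everyone's ranking, nor via another `π' ∈ V`: the coalition `S ∈ π` supplied by effectiveness
strictly prefers `π`, so it stays out of the blocking coalition and keeps its cell in `π'`. -/

namespace Partn

variable {N : Type*}

theorem ext {π π' : Partn N} (h : π.cell = π'.cell) : π = π' := by
  cases π; cases π'; cases h; rfl

instance [IsEmpty N] : Subsingleton (Partn N) :=
  ⟨fun _ _ => ext (funext isEmptyElim)⟩

theorem cell_eq_of_hasCoal {π : Partn N} {S : Set N} (hS : π.HasCoal S) {i : N} (hi : i ∈ S) :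
    π.cell i = S := by
  obtain ⟨k, rfl⟩ := hS
  exact π.cell_eq k i hi

end Partn

namespace CFP

variable {N : Type*} {P : CFP N}

theorem blocks_univ_of_forall_spref [Nonempty N] {π π' : Partn N} (hπ : π ∈ P.adm)
    (hπ' : π' ∈ P.adm) (h : ∀ i, P.spref i π' π) : P.Blocks Set.univ π π' := by
  obtain ⟨j⟩ := ‹Nonempty N›
  refine ⟨hπ, hπ', Set.univ_nonempty, fun i _ => (h i).1, ⟨j, trivial, h j⟩,
    fun k hk _ => absurd trivial hk, fun k hk => ?_⟩
  exact absurd hk (Set.nonempty_iff_ne_empty.mp ⟨k, π.mem_cell k, trivial⟩)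

theorem Blocks.not_spref_of_mem {C : Set N} {π π' : Partn N} (hb : P.Blocks C π π') {i : N}
    (hi : i ∈ C) : ¬ P.spref i π π' :=
  fun h => h.2 (hb.2.2.2.1 i hi)

theorem Blocks.cell_eq_of_disjoint {C S : Set N} {π π' : Partn N} (hb : P.Blocks C π π')
    (hS : π.HasCoal S) (hSC : Disjoint S C) {i : N} (hi : i ∈ S) : π'.cell i = π.cell i := by
  refine hb.2.2.2.2.2.2 i ?_
  rw [Partn.cell_eq_of_hasCoal hS hi]
  exact hSC.inter_eq

theorem Effective.not_blocks {V : Set (Partn N)} (he : P.Effective V) {C : Set N}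
    {π π' : Partn N} (hπ : π ∈ V) (hπ' : π' ∈ V) : ¬ P.Blocks C π π' := by
  intro hb
  have hne : π ≠ π' := by
    rintro rfl
    obtain ⟨j, -, hj⟩ := hb.2.2.2.2.1
    exact hj.2 hj.1
  obtain ⟨S, ⟨i, hi⟩, hSdiff, hS, hstrict⟩ := he π hπ π' hπ' hne
  have hSC : Disjoint S C :=
    Set.disjoint_left.mpr fun m hm hmC => hb.not_spref_of_mem hmC (hstrict m hm)
  exact hSdiff hi (hb.cell_eq_of_disjoint hS hSC hi).symm

namespace TopCollection

variable {V : Set (Partn N)}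

theorem core_subset (hV : P.TopCollection V) : P.Core ⊆ V := by
  obtain ⟨⟨π₀, hπ₀⟩, hsub, htop⟩ := hV
  rintro π ⟨hπ, hnb⟩
  by_contra hπV
  cases isEmpty_or_nonempty N
  · exact hπV (Subsingleton.elim π₀ π ▸ hπ₀)
  · exact hnb ⟨Set.univ, π₀, blocks_univ_of_forall_spref hπ (hsub hπ₀)
      fun i => htop i π₀ hπ₀ π hπ hπV⟩

theorem subset_core (hV : P.TopCollection V) (he : P.Effective V) : V ⊆ P.Core := by
  obtain ⟨-, hsub, htop⟩ := hV
  refine fun π hπ => ⟨hsub hπ, ?_⟩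
  rintro ⟨C, π', hb⟩
  by_cases hπ' : π' ∈ V
  · exact he.not_blocks hπ hπ' hb
  · obtain ⟨j, -, hj⟩ := hb.2.2.2.2.1
    exact (htop j π hπ π' hb.2.1 hπ').2 hj.1

end TopCollection

end CFP

theorem core_eq_top_collection_general {N : Type*} (P : CFP N)
    (V : Set (Partn N)) (hV : P.TopCollection V) (he : P.Effective V) :
    P.Core = V :=
  hV.core_subset.antisymm (hV.subset_core he)

/-- with unrestricted preferences, if there is an effective
top-partition collection `V`, then the core equals `V`. -/
theorem core_eq_top_collection {N : Type*} (P : CFP N) (hP : P.NoTies)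
    (V : Set (Partn N)) (hV : P.TopCollection V) (he : P.Effective V) :
    P.Core = V :=
  core_eq_top_collection_general P V hV he
end

section
/- If preferences are order-preserving and V is a top-partition collection containing two partitions π, π' such that some coalition S satisfies S ∈ π and S = D(π,π') (the set of agents in different coalitions under π and π'), then V is not effective. -/
/-! If `D(π,π')` is itself a coalition of `π`, effectiveness applied to `(π, π')` yields a
coalition of `π` inside `D(π,π')`, which must be all of `D(π,π')`; so every agent of `D(π,π')`
strictly prefers `π`. Applied to `(π', π)` it yields an agent of `D(π',π) = D(π,π')` strictly
preferring `π'`, a contradiction. -/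

namespace Partn
variable {N : Type*} (π π' : Partn N) {S T : Set N}

theorem diff_comm : π.diff π' = π'.diff π := by
  ext i
  exact ne_comm

theorem diff_self : π.diff π = ∅ := by
  ext i
  simp [diff]

variable {π}

theorem HasCoal.cell_eq_of_mem (hS : π.HasCoal S) {i : N} (hi : i ∈ S) : π.cell i = S := by
  obtain ⟨j, rfl⟩ := hS
  exact π.cell_eq j i hi

theorem HasCoal.nonempty (hS : π.HasCoal S) : S.Nonempty := by
  obtain ⟨j, rfl⟩ := hS
  exact ⟨j, π.mem_cell j⟩

theorem HasCoal.eq_of_mem_of_mem (hS : π.HasCoal S) (hT : π.HasCoal T) {i : N}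
    (hiS : i ∈ S) (hiT : i ∈ T) : S = T :=
  (hS.cell_eq_of_mem hiS).symm.trans (hT.cell_eq_of_mem hiT)

theorem ne_of_hasCoal_diff (h : π.HasCoal (π.diff π')) : π ≠ π' := by
  rintro rfl
  simpa [diff_self] using h.nonempty

end Partn

namespace CFP
variable {N : Type*} {P : CFP N} {V : Set (Partn N)} {π π' : Partn N}

theorem spref_asymm {i : N} (h : P.spref i π π') : ¬ P.spref i π' π :=
  fun h' => h.2 h'.1

theorem Effective.spref_of_hasCoal_diff (hEff : P.Effective V) (hπ : π ∈ V) (hπ' : π' ∈ V)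
    (hD : π.HasCoal (π.diff π')) : ∀ i ∈ π.diff π', P.spref i π π' := by
  obtain ⟨S, ⟨k, hk⟩, hSD, hS, hpref⟩ :=
    hEff π hπ π' hπ' (Partn.ne_of_hasCoal_diff π' hD)
  rwa [hS.eq_of_mem_of_mem hD hk (hSD hk)] at hpref

end CFP

theorem not_effective_of_diff_coal_general {N : Type*} (P : CFP N)
    (V : Set (Partn N)) (π π' : Partn N) (S : Set N)
    (hπ : π ∈ V) (hπ' : π' ∈ V) (hS : π.HasCoal S) (hD : S = π.diff π') :
    ¬ P.Effective V := by
  intro hEff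
  subst hD
  have hπ_pref := hEff.spref_of_hasCoal_diff hπ hπ' hS
  obtain ⟨S', ⟨i, hi⟩, hS'D, -, hπ'_pref⟩ :=
    hEff π' hπ' π hπ (Partn.ne_of_hasCoal_diff π' hS).symm
  rw [← Partn.diff_comm] at hS'D
  exact CFP.spref_asymm (hπ_pref i (hS'D hi)) (hπ'_pref i hi)

theorem not_effective_of_diff_coal {N : Type*} (P : CFP N) (hP : P.OrderPreserving)
    (V : Set (Partn N)) (hV : P.TopCollection V) (π π' : Partn N) (S : Set N)
    (hπ : π ∈ V) (hπ' : π' ∈ V) (hS : π.HasCoal S) (hD : S = π.diff π') :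
    ¬ P.Effective V :=
  not_effective_of_diff_coal_general P V π π' S hπ hπ' hS hD
end

section
/- A coalition formation problem with order-preserving preferences and its induced problem without externalities generate the same domination relation, and hence the same absorbing sets. More generally, two associated problems with order-preserving preferences (i.e., inducing the same problem without externalities) generate the same absorbing sets. -/
/-!
In a myopic domination `π' ≫ π` via a coalition `C ∈ π'`, every member of `C` changes coalition:
otherwise `C` would be a coalition of `π` as well, agents outside `C` would keep their coalitions,
and `π' = π` could not be strictly preferred by anyone. Domination therefore only involves
comparisons between partitions that place the comparing agent in different coalitions, and on
those an order-preserving problem and its induced problem agree (strictly, because there are no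
ties). So the domination relations coincide, and absorbing sets depend only on the
admissible partitions and the domination relation.
-/

lemma Partn.ext_cell {N : Type*} {π π' : Partn N} (h : ∀ i, π.cell i = π'.cell i) : π = π' := by
  cases π; cases π'; congr 1; exact funext h

lemma Partn.cell_eq_of_mem_of_cell_eq {N : Type*} (π : Partn N) {C : Set N} {i j : N}
    (hi : π.cell i = C) (hj : j ∈ C) : π.cell j = C :=
  hi ▸ π.cell_eq i j (hi ▸ hj)

lemma Partn.cell_inter_eq_empty_of_not_mem {N : Type*} (π : Partn N) {C : Set N} {i j : N}
    (hi : π.cell i = C) (hj : j ∉ C) : π.cell j ∩ C = ∅ := by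
  refine Set.eq_empty_of_forall_notMem fun m ⟨hmj, hmC⟩ => hj ?_
  rw [← π.cell_eq_of_mem_of_cell_eq hi hmC, π.cell_eq j m hmj]
  exact π.mem_cell j

namespace CFP

variable {N : Type*} {P Q : CFP N} {C : Set N} {π π' : Partn N}

lemma Blocks.cell_ne (hB : P.Blocks C π π') (hC : π'.HasCoal C) {i : N} (hi : i ∈ C) :
    π.cell i ≠ π'.cell i := by
  intro hsame
  obtain ⟨k, hk⟩ := hC
  have hi' : π'.cell i = C := π'.cell_eq_of_mem_of_cell_eq hk hi
  have hiC : π.cell i = C := hsame.trans hi'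
  have hπ : π = π' := Partn.ext_cell fun j => by
    by_cases hj : j ∈ C
    · rw [π.cell_eq_of_mem_of_cell_eq hiC hj, π'.cell_eq_of_mem_of_cell_eq hi' hj]
    · exact (hB.2.2.2.2.2.2 j (π.cell_inter_eq_empty_of_not_mem hiC hj)).symm
  obtain ⟨_, _, hstrict⟩ := hB.2.2.2.2.1
  exact hstrict.2 (hπ ▸ hstrict.1)

lemma Blocks.of_pref_iff_of_cell_ne (hadm : P.adm = Q.adm)
    (hpref : ∀ i, ∀ σ ∈ P.adm, ∀ σ' ∈ P.adm, σ.cell i ≠ σ'.cell i →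
      (P.pref i σ σ' ↔ Q.pref i σ σ'))
    (hB : P.Blocks C π π') (hC : π'.HasCoal C) : Q.Blocks C π π' := by
  have hmove : ∀ i ∈ C, π'.cell i ≠ π.cell i := fun i hi => (hB.cell_ne hC hi).symm
  obtain ⟨hπ, hπ', hCne, hweak, ⟨j, hj, hstrict⟩, hsingle, hout⟩ := hB
  refine ⟨hadm ▸ hπ, hadm ▸ hπ', hCne, fun i hi => (hpref i π' hπ' π hπ (hmove i hi)).1 (hweak i hi),
    ⟨j, hj, ?_, ?_⟩, hsingle, hout⟩
  · exact (hpref j π' hπ' π hπ (hmove j hj)).1 hstrict.1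
  · exact fun h => hstrict.2 ((hpref j π hπ π' hπ' (hmove j hj).symm).2 h)

lemma dom_eq_of_pref_iff_of_cell_ne (hadm : P.adm = Q.adm)
    (hpref : ∀ i, ∀ σ ∈ P.adm, ∀ σ' ∈ P.adm, σ.cell i ≠ σ'.cell i →
      (P.pref i σ σ' ↔ Q.pref i σ σ')) :
    P.Dom = Q.Dom := by
  have hpref' : ∀ i, ∀ σ ∈ Q.adm, ∀ σ' ∈ Q.adm, σ.cell i ≠ σ'.cell i →
      (Q.pref i σ σ' ↔ P.pref i σ σ') := by
    rw [← hadm]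
    exact fun i σ hσ σ' hσ' hne => (hpref i σ hσ σ' hσ' hne).symm
  funext π' π
  exact propext ⟨fun ⟨C, hB, hC⟩ => ⟨C, hB.of_pref_iff_of_cell_ne hadm hpref hC, hC⟩,
    fun ⟨C, hB, hC⟩ => ⟨C, hB.of_pref_iff_of_cell_ne hadm.symm hpref' hC, hC⟩⟩

lemma Induces.pref_iff_of_cell_ne (hP : P.NoTies) (hPQ : P.Induces Q) {i : N}
    (hπ : π ∈ P.adm) (hπ' : π' ∈ P.adm) (hne : π.cell i ≠ π'.cell i) :
    P.pref i π π' ↔ Q.pref i π π' := by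
  constructor
  · intro h
    exact (((hPQ.2 i π hπ π' hπ').2 hne).1 ⟨h, fun h' => hne (hP i π hπ π' hπ' h h')⟩).1
  · intro h
    by_contra hnot
    have hstrict : P.spref i π' π := ⟨(P.total i π hπ π' hπ').resolve_left hnot, hnot⟩
    exact (((hPQ.2 i π' hπ' π hπ).2 hne.symm).1 hstrict).2 h

lemma Induces.dom_eq (hP : P.NoTies) (hPQ : P.Induces Q) : P.Dom = Q.Dom :=
  dom_eq_of_pref_iff_of_cell_ne hPQ.1.symm fun _ _ hσ _ hσ' hne =>
    hPQ.pref_iff_of_cell_ne hP hσ hσ' hne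

lemma absorbing_eq_of_dom_eq (hadm : P.adm = Q.adm) (hdom : P.Dom = Q.Dom) :
    P.Absorbing = Q.Absorbing := by
  funext A
  unfold Absorbing
  rw [hadm, hdom]

end CFP

theorem associated_same_absorbing {N : Type*} (P P' R : CFP N)
    (hP : P.OrderPreserving) (hP' : P'.OrderPreserving)
    (h1 : CFP.Induces P R) (h2 : CFP.Induces P' R) :
    (∀ π π' : Partn N, P.Dom π' π ↔ R.Dom π' π) ∧
    (∀ A : Set (Partn N), P.Absorbing A ↔ R.Absorbing A) ∧
    (∀ A : Set (Partn N), P.Absorbing A ↔ P'.Absorbing A) := by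
  have hPR : P.Absorbing = R.Absorbing :=
    CFP.absorbing_eq_of_dom_eq h1.1.symm (h1.dom_eq hP.1)
  have hP'R : P'.Absorbing = R.Absorbing :=
    CFP.absorbing_eq_of_dom_eq h2.1.symm (h2.dom_eq hP'.1)
  exact ⟨fun π π' => by rw [h1.dom_eq hP.1], fun A => by rw [hPR], fun A => by rw [hPR, hP'R]⟩
end
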